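/- Let M be a closed subspace of H[[t,t⁻¹]] that is invariant under the actions of A' and of t⁻¹ and satisfies H[[t⁻¹]] ⊆ M ⊆ tⁿH[[t⁻¹]] for some n ≥ 0. Then there exists φ ∈ PPU⁺(A) with φ·H[[t⁻¹]] = M; indeed φ can be chosen as a product of at most n elements of the form p_{M₁} for closed A'-invariant subspaces M₁ ⊆ H. That is, the map Ω⁺ : φ ↦ φ·H[[t⁻¹]] from PPU⁺(A) to sub(H)₀^∞ is surjective. -/

import Mathlib

noncomputable section

/-- Finite Laurent polynomials `A[t,t⁻¹]` with coefficients among the bounded operators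
on `H`, with convolution product. -/
abbrev LaurentOp (H : Type*) [NormedAddCommGroup H] [InnerProductSpace ℂ H]
    [CompleteSpace H] : Type _ :=
  AddMonoidAlgebra (H →L[ℂ] H) ℤ

variable {H : Type*} [NormedAddCommGroup H] [InnerProductSpace ℂ H] [CompleteSpace H]

/-- The involution `φ* = Σ tⁱ (φ₋ᵢ)*` on `B(H)[t,t⁻¹]` (with `*` the adjoint). -/
def lstar (φ : LaurentOp H) : LaurentOp H :=
  AddMonoidAlgebra.ofCoeff
    (Finsupp.equivMapDomain (Equiv.neg ℤ) (Finsupp.mapRange star (star_zero _) φ.coeff))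

/-- The specialization `ε₁(φ) = Σᵢ φᵢ`. -/
def eps1 (φ : LaurentOp H) : H →L[ℂ] H := φ.coeff.sum fun _ a => a

/-- Membership in `PPU(A)`: all coefficients of `φ` lie in the von Neumann algebra `A`,
`φ` is paraunitary (`φ*φ = φφ* = 1`), and `ε₁(φ) = 1`. -/
def InPPU (A : VonNeumannAlgebra H) (φ : LaurentOp H) : Prop :=
  (∀ i, φ.coeff i ∈ A) ∧ lstar φ * φ = 1 ∧ φ * lstar φ = 1 ∧ eps1 φ = 1

/-- Membership in `PPU⁺(A) = PPU(A) ∩ A[t]`. -/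
def InPPUplus (A : VonNeumannAlgebra H) (φ : LaurentOp H) : Prop :=
  InPPU A φ ∧ ∀ i < (0 : ℤ), φ.coeff i = 0

/-- The action of a Laurent polynomial on a two-sided sequence:
`(φx)ᵢ = Σ_k φ_k (x_{i−k})`. -/
def act (φ : LaurentOp H) (x : ℤ → H) : ℤ → H :=
  fun i => ∑ k ∈ φ.coeff.support, φ.coeff k (x (i - k))

/-- `tⁿH[[t⁻¹]]`: the square-summable sequences (i.e. elements of
`H[[t,t⁻¹]] = ℓ²(ℤ,H)`) vanishing in all degrees `> n`. -/
def Hmn (H : Type*) [NormedAddCommGroup H] [InnerProductSpace ℂ H] [CompleteSpace H]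
    (n : ℤ) : Set (ℤ → H) :=
  {x | Memℓp x 2 ∧ ∀ i > n, x i = 0}

/-- `φ·H[[t⁻¹]]`, the image of `H[[t⁻¹]] = t⁰H[[t⁻¹]]` under the action of `φ`. -/
def actH (φ : LaurentOp H) : Set (ℤ → H) := act φ '' Hmn H 0

/-- `S` is a closed linear subspace of `H[[t,t⁻¹]] = ℓ²(ℤ,H)` which is invariant under
the actions of the commutant `A'` (acting coefficientwise) and of `t⁻¹` (the shift). -/
def IsInvClosed (A : VonNeumannAlgebra H) (S : Set (ℤ → H)) : Prop :=
  (∀ x ∈ S, Memℓp x 2) ∧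
  IsClosed {y : lp (fun _ : ℤ => H) 2 | (y : ℤ → H) ∈ S} ∧
  (0 ∈ S) ∧ (∀ x ∈ S, ∀ y ∈ S, x + y ∈ S) ∧ (∀ (c : ℂ), ∀ x ∈ S, c • x ∈ S) ∧
  (∀ x ∈ S, (fun i => x (i + 1)) ∈ S) ∧
  (∀ ψ ∈ A.commutant, ∀ x ∈ S, (fun i => ψ (x i)) ∈ S)

/-- The orthogonal projection `π_M` onto a closed subspace `M`, as an operator on `H`. -/
def projL (M : Submodule ℂ H) (hM : IsClosed (M : Set H)) : H →L[ℂ] H :=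
  haveI : CompleteSpace M := hM.completeSpace_coe
  M.subtypeL.comp (M.orthogonalProjectionOnto)

/-- The element `p_M = tπ_M + π_{Mᗮ}` of `A[t,t⁻¹]`. -/
def pEl (M : Submodule ℂ H) (hM : IsClosed (M : Set H)) : LaurentOp H :=
  AddMonoidAlgebra.ofCoeff (Finsupp.single (1 : ℤ) (projL M hM) +
    Finsupp.single (0 : ℤ) (projL Mᗮ M.isClosed_orthogonal))

/-- The element `t = t·1` of `A[t,t⁻¹]`. -/
def tEl (H : Type*) [NormedAddCommGroup H] [InnerProductSpace ℂ H] [CompleteSpace H] :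
    LaurentOp H :=
  AddMonoidAlgebra.ofCoeff (Finsupp.single (1 : ℤ) 1)

/-- `M` is invariant under every element of the commutant `A'`. -/
def InvariantC (A : VonNeumannAlgebra H) (M : Submodule ℂ H) : Prop :=
  ∀ φ ∈ A.commutant, ∀ x ∈ M, φ x ∈ M

namespace Stmt13

variable {H : Type*} [NormedAddCommGroup H] [InnerProductSpace ℂ H] [CompleteSpace H]

open Finsupp

lemma lstar_apply (φ : LaurentOp H) (a : ℤ) : (lstar φ).coeff a = star (φ.coeff (-a)) := rfl

lemma lstar_ext {φ ψ : LaurentOp H} (h : ∀ a, φ.coeff a = ψ.coeff a) : φ = ψ :=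
  AddMonoidAlgebra.ext (Finsupp.ext h)

lemma lstar_single (k : ℤ) (T : H →L[ℂ] H) :
    lstar (AddMonoidAlgebra.single k T : LaurentOp H) = AddMonoidAlgebra.single (-k) (star T) := by
  apply lstar_ext; intro a
  rw [lstar_apply, AddMonoidAlgebra.coeff_single, AddMonoidAlgebra.coeff_single]
  rcases eq_or_ne a (-k) with rfl | h
  · rw [Finsupp.single_eq_same, show -(-k) = k by omega, Finsupp.single_eq_same]
  · rw [Finsupp.single_eq_of_ne (by omega), Finsupp.single_eq_of_ne (fun hh => h (by omega)),
      star_zero]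

lemma lstar_add (φ ψ : LaurentOp H) : lstar (φ + ψ) = lstar φ + lstar ψ := by
  apply lstar_ext; intro a
  rw [AddMonoidAlgebra.coeff_add, Finsupp.add_apply, lstar_apply, lstar_apply, lstar_apply,
    AddMonoidAlgebra.coeff_add, Finsupp.add_apply, star_add]

lemma lstar_zero : lstar (0 : LaurentOp H) = 0 := by
  apply lstar_ext; intro a
  rw [lstar_apply, AddMonoidAlgebra.coeff_zero, Finsupp.zero_apply, Finsupp.zero_apply, star_zero]

lemma lstar_one : lstar (1 : LaurentOp H) = 1 := by
  rw [AddMonoidAlgebra.one_def, lstar_single]; simp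

lemma lstar_mul (φ ψ : LaurentOp H) : lstar (φ * ψ) = lstar ψ * lstar φ := by
  induction φ using AddMonoidAlgebra.induction_linear with
  | zero => rw [zero_mul, lstar_zero, mul_zero]
  | add f g hf hg => rw [add_mul, lstar_add, hf, hg, lstar_add, mul_add]
  | single k T =>
      rw [lstar_single]
      apply lstar_ext; intro a
      rw [lstar_apply, AddMonoidAlgebra.coeff_single_mul_apply,
        AddMonoidAlgebra.coeff_mul_single_apply, lstar_apply, star_mul]
      rw [show -k + -a = -(a + - -k) by omega]

lemma eps1_single (k : ℤ) (T : H →L[ℂ] H) :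
    eps1 (AddMonoidAlgebra.single k T : LaurentOp H) = T := by
  unfold eps1
  exact Finsupp.sum_single_index rfl

lemma eps1_add (φ ψ : LaurentOp H) : eps1 (φ + ψ) = eps1 φ + eps1 ψ := by
  unfold eps1
  rw [AddMonoidAlgebra.coeff_add]
  exact Finsupp.sum_add_index (fun _ _ => rfl) (fun _ _ _ _ => rfl)

lemma eps1_zero : eps1 (0 : LaurentOp H) = 0 := rfl

lemma eps1_one : eps1 (1 : LaurentOp H) = 1 := by
  rw [AddMonoidAlgebra.one_def, eps1_single]

lemma eps1_mul (φ ψ : LaurentOp H) : eps1 (φ * ψ) = eps1 φ * eps1 ψ := by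
  induction φ using AddMonoidAlgebra.induction_linear with
  | zero => rw [zero_mul, eps1_zero, zero_mul]
  | add f g hf hg => rw [add_mul, eps1_add, hf, hg, eps1_add, add_mul]
  | single k T =>
      induction ψ using AddMonoidAlgebra.induction_linear with
      | zero => rw [mul_zero, eps1_zero, mul_zero]
      | add f g hf hg => rw [mul_add, eps1_add, hf, hg, eps1_add, mul_add]
      | single k' T' =>
          rw [AddMonoidAlgebra.single_mul_single, eps1_single, eps1_single, eps1_single]

lemma mul_coeff_mem (A : VonNeumannAlgebra H) {φ ψ : LaurentOp H}
    (hφ : ∀ i, φ.coeff i ∈ A) (hψ : ∀ i, ψ.coeff i ∈ A) : ∀ i, (φ * ψ).coeff i ∈ A := by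
  classical
  intro i
  rw [AddMonoidAlgebra.coeff_mul]
  rw [Finsupp.sum]
  refine sum_mem fun a _ => ?_
  rw [Finsupp.sum]
  refine sum_mem fun c _ => ?_
  split
  · exact mul_mem (hφ a) (hψ c)
  · exact zero_mem A

lemma mul_coeff_nonneg {φ ψ : LaurentOp H}
    (hφ : ∀ i < (0:ℤ), φ.coeff i = 0) (hψ : ∀ i < (0:ℤ), ψ.coeff i = 0) :
    ∀ i < (0:ℤ), (φ * ψ).coeff i = 0 := by
  classical
  intro i hi
  rw [AddMonoidAlgebra.coeff_mul, Finsupp.sum]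
  refine Finset.sum_eq_zero fun a ha => ?_
  rcases lt_or_ge a 0 with h | h
  · exact absurd (hφ a h) (Finsupp.mem_support_iff.1 ha)
  · rw [Finsupp.sum]
    refine Finset.sum_eq_zero fun c hc => ?_
    rcases lt_or_ge c 0 with h' | h'
    · exact absurd (hψ c h') (Finsupp.mem_support_iff.1 hc)
    · rw [if_neg (by omega)]

-- act lemmas

lemma act_eq_sum (φ : LaurentOp H) (x : ℤ → H) (i : ℤ) {T : Finset ℤ}
    (hT : φ.coeff.support ⊆ T) : act φ x i = ∑ k ∈ T, φ.coeff k (x (i - k)) :=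
  Finset.sum_subset hT (fun k _ hk => by
    rw [Finsupp.notMem_support_iff.1 hk]; simp)

lemma act_single (k : ℤ) (T : H →L[ℂ] H) (x : ℤ → H) :
    act (AddMonoidAlgebra.single k T : LaurentOp H) x = fun i => T (x (i - k)) := by
  funext i
  rw [act_eq_sum (AddMonoidAlgebra.single k T) x i Finsupp.support_single_subset,
    Finset.sum_singleton, AddMonoidAlgebra.coeff_single, Finsupp.single_eq_same]

lemma act_zero_left (x : ℤ → H) : act (0 : LaurentOp H) x = 0 := by
  funext i; simp [act]

lemma act_add_left (φ ψ : LaurentOp H) (x : ℤ → H) :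
    act (φ + ψ) x = act φ x + act ψ x := by
  classical
  funext i
  rw [Pi.add_apply,
    act_eq_sum (φ + ψ) x i (T := φ.coeff.support ∪ ψ.coeff.support)
      (by rw [AddMonoidAlgebra.coeff_add]; exact Finsupp.support_add),
    act_eq_sum φ x i (T := φ.coeff.support ∪ ψ.coeff.support) Finset.subset_union_left,
    act_eq_sum ψ x i (T := φ.coeff.support ∪ ψ.coeff.support) Finset.subset_union_right,
    ← Finset.sum_add_distrib]
  refine Finset.sum_congr rfl fun k _ => ?_
  rw [AddMonoidAlgebra.coeff_add, Finsupp.add_apply, ContinuousLinearMap.add_apply]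

lemma act_one (x : ℤ → H) : act (1 : LaurentOp H) x = x := by
  rw [AddMonoidAlgebra.one_def, act_single]
  funext i; simp

lemma act_add_right (φ : LaurentOp H) (x y : ℤ → H) :
    act φ (x + y) = act φ x + act φ y := by
  funext i
  simp [act, Finset.sum_add_distrib]

lemma act_smul_right (φ : LaurentOp H) (c : ℂ) (x : ℤ → H) :
    act φ (c • x) = c • act φ x := by
  funext i
  simp [act, Finset.smul_sum]

lemma act_zero_right (φ : LaurentOp H) : act φ (0 : ℤ → H) = 0 := by
  funext i; simp [act]

lemma act_shift (φ : LaurentOp H) (x : ℤ → H) :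
    act φ (fun i => x (i + 1)) = fun i => act φ x (i + 1) := by
  funext i
  unfold act
  refine Finset.sum_congr rfl fun k _ => ?_
  show (φ.coeff k) (x (i - k + 1)) = (φ.coeff k) (x (i + 1 - k))
  rw [show i - k + 1 = i + 1 - k by omega]

lemma act_mul (φ ψ : LaurentOp H) (x : ℤ → H) :
    act (φ * ψ) x = act φ (act ψ x) := by
  classical
  induction φ using AddMonoidAlgebra.induction_linear with
  | zero => rw [zero_mul, act_zero_left, act_zero_left]
  | add f g hf hg => rw [add_mul, act_add_left, act_add_left, hf, hg]
  | single a b =>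
      funext i
      have hsupp : (AddMonoidAlgebra.single a b * ψ : LaurentOp H).coeff.support ⊆
          Finset.image (a + ·) ψ.coeff.support := by
        intro m hm
        rw [Finsupp.mem_support_iff, AddMonoidAlgebra.coeff_single_mul_apply] at hm
        have : ψ.coeff (-a + m) ≠ 0 := fun h => hm (by rw [h, mul_zero])
        exact Finset.mem_image.2 ⟨-a + m, Finsupp.mem_support_iff.2 this, by omega⟩
      rw [act_eq_sum _ x i hsupp, act_single,
        Finset.sum_image (fun p _ q _ h => by omega)]
      show _ = b (act ψ x (i - a))
      unfold act
      rw [map_sum]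
      refine Finset.sum_congr rfl fun k _ => ?_
      rw [AddMonoidAlgebra.coeff_single_mul_apply]
      show (b * ψ.coeff (-a + (a + k))) (x (i - (a + k))) = b (ψ.coeff k (x (i - a - k)))
      rw [show -a + (a + k) = k by omega, show i - (a + k) = i - a - k by omega]
      rfl

end Stmt13
namespace Stmt13

variable {H : Type*} [NormedAddCommGroup H] [InnerProductSpace ℂ H] [CompleteSpace H]

open scoped ENNReal

lemma two_pos : (0:ℝ) < (2 : ℝ≥0∞).toReal := by norm_num

def shiftEquiv' (k : ℤ) : ℤ ≃ ℤ :=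
  ⟨fun i => i - k, fun i => i + k, fun i => by show i - k + k = i; omega,
    fun i => by show i + k - k = i; omega⟩

lemma summable_shift (k : ℤ) {x : ℤ → H} (hx : Memℓp x 2) :
    Summable (fun i : ℤ => ‖x (i - k)‖ ^ (2:ℝ≥0∞).toReal) := by
  have h2 : Summable ((fun i : ℤ => ‖x i‖ ^ (2:ℝ≥0∞).toReal) ∘ (shiftEquiv' k)) :=
    (Equiv.summable_iff (shiftEquiv' k)).2 (hx.summable two_pos)
  exact h2

lemma tsum_shift (k : ℤ) (x : ℤ → H) :
    (∑' i : ℤ, ‖x (i - k)‖ ^ (2:ℝ≥0∞).toReal) = ∑' i : ℤ, ‖x i‖ ^ (2:ℝ≥0∞).toReal := by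
  have h2 := (shiftEquiv' k).tsum_eq (fun i : ℤ => ‖x i‖ ^ (2:ℝ≥0∞).toReal)
  exact h2

lemma memℓp_term (T : H →L[ℂ] H) (k : ℤ) {x : ℤ → H} (hx : Memℓp x 2) :
    Memℓp (fun i => T (x (i - k))) 2 := by
  apply memℓp_gen
  have hxs : Summable fun i : ℤ => ‖x (i - k)‖ ^ (2:ℝ≥0∞).toReal := summable_shift k hx
  refine (hxs.mul_left (‖T‖ ^ (2:ℝ≥0∞).toReal)).of_nonneg_of_le
    (fun i => Real.rpow_nonneg (norm_nonneg _) _) (fun i => ?_)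
  rw [← Real.mul_rpow (norm_nonneg _) (norm_nonneg _)]
  exact Real.rpow_le_rpow (norm_nonneg _) (T.le_opNorm _) (le_of_lt two_pos)

def termLp (T : H →L[ℂ] H) (k : ℤ) (x : lp (fun _ : ℤ => H) 2) : lp (fun _ : ℤ => H) 2 :=
  ⟨fun i => T (x (i - k)), memℓp_term T k (lp.memℓp x)⟩

lemma termLp_apply (T : H →L[ℂ] H) (k : ℤ) (x : lp (fun _ : ℤ => H) 2) (i : ℤ) :
    (termLp T k x : ℤ → H) i = T (x (i - k)) := rfl

lemma termLp_norm (T : H →L[ℂ] H) (k : ℤ) (x : lp (fun _ : ℤ => H) 2) :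
    ‖termLp T k x‖ ≤ ‖T‖ * ‖x‖ := by
  refine lp.norm_le_of_tsum_le two_pos (mul_nonneg (norm_nonneg _) (norm_nonneg _)) ?_
  have hx : Summable fun i : ℤ => ‖x i‖ ^ (2:ℝ≥0∞).toReal := (lp.memℓp x).summable two_pos
  have hxs : Summable fun i : ℤ => ‖x (i - k)‖ ^ (2:ℝ≥0∞).toReal :=
    summable_shift k (lp.memℓp x)
  have hbound : ∀ i : ℤ, ‖(termLp T k x : ℤ → H) i‖ ^ (2:ℝ≥0∞).toReal ≤
      ‖T‖ ^ (2:ℝ≥0∞).toReal * ‖x (i - k)‖ ^ (2:ℝ≥0∞).toReal := fun i => by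
    rw [← Real.mul_rpow (norm_nonneg _) (norm_nonneg _)]
    exact Real.rpow_le_rpow (norm_nonneg _) (T.le_opNorm _) (le_of_lt two_pos)
  calc ∑' i, ‖(termLp T k x : ℤ → H) i‖ ^ (2:ℝ≥0∞).toReal
      ≤ ∑' i, ‖T‖ ^ (2:ℝ≥0∞).toReal * ‖x (i - k)‖ ^ (2:ℝ≥0∞).toReal :=
        Summable.tsum_le_tsum hbound ((lp.memℓp (termLp T k x)).summable two_pos) (hxs.mul_left _)
    _ = ‖T‖ ^ (2:ℝ≥0∞).toReal * ∑' i, ‖x (i - k)‖ ^ (2:ℝ≥0∞).toReal := tsum_mul_left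
    _ = ‖T‖ ^ (2:ℝ≥0∞).toReal * ∑' i, ‖x i‖ ^ (2:ℝ≥0∞).toReal := by
        rw [tsum_shift k x]
    _ = ‖T‖ ^ (2:ℝ≥0∞).toReal * ‖x‖ ^ (2:ℝ≥0∞).toReal := by
        rw [lp.norm_rpow_eq_tsum two_pos]
    _ = (‖T‖ * ‖x‖) ^ (2:ℝ≥0∞).toReal :=
        (Real.mul_rpow (norm_nonneg _) (norm_nonneg _)).symm

def termCLM (T : H →L[ℂ] H) (k : ℤ) :
    lp (fun _ : ℤ => H) 2 →L[ℂ] lp (fun _ : ℤ => H) 2 :=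
  LinearMap.mkContinuous
    { toFun := termLp T k
      map_add' := fun x y => by
        apply Subtype.ext
        funext i
        show T ((x + y : lp _ _) (i - k)) = _
        rw [lp.coeFn_add, Pi.add_apply, map_add]
        rfl
      map_smul' := fun c x => by
        apply Subtype.ext
        funext i
        show T ((c • x : lp _ _) (i - k)) = _
        rw [lp.coeFn_smul, Pi.smul_apply, map_smul]
        rfl }
    ‖T‖ (fun x => termLp_norm T k x)

lemma termCLM_apply (T : H →L[ℂ] H) (k : ℤ) (x : lp (fun _ : ℤ => H) 2) (i : ℤ) :
    (termCLM T k x : ℤ → H) i = T (x (i - k)) := rfl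

def actCLM (φ : LaurentOp H) :
    lp (fun _ : ℤ => H) 2 →L[ℂ] lp (fun _ : ℤ => H) 2 :=
  ∑ k ∈ φ.coeff.support, termCLM (φ.coeff k) k

lemma actCLM_coe (φ : LaurentOp H) (x : lp (fun _ : ℤ => H) 2) :
    (actCLM φ x : ℤ → H) = act φ ↑x := by
  funext i
  rw [actCLM, ContinuousLinearMap.sum_apply, lp.coeFn_sum, Finset.sum_apply]
  rfl

lemma memℓp_act (φ : LaurentOp H) {x : ℤ → H} (hx : Memℓp x 2) : Memℓp (act φ x) 2 := by
  have := actCLM_coe φ ⟨x, hx⟩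
  rw [← this]
  exact lp.memℓp _

def singleCLM (c : ℤ) : H →L[ℂ] lp (fun _ : ℤ => H) 2 :=
  LinearMap.mkContinuous
    { toFun := fun v => lp.single 2 c v
      map_add' := fun v w => by
        apply Subtype.ext
        funext j
        rcases eq_or_ne j c with rfl | h
        · rw [lp.single_apply_self, lp.coeFn_add, Pi.add_apply, lp.single_apply_self,
            lp.single_apply_self]
        · rw [lp.single_apply_ne _ _ _ h, lp.coeFn_add, Pi.add_apply,
            lp.single_apply_ne _ _ _ h, lp.single_apply_ne _ _ _ h, add_zero]
      map_smul' := fun r v => by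
        simpa using lp.single_smul 2 c v r }
    1 (fun v => by
      rw [one_mul]
      exact le_of_eq (lp.norm_single (E := fun _ : ℤ => H) (p := 2) (by norm_num) c v))

lemma singleCLM_coe (c : ℤ) (v : H) :
    ((singleCLM c v : lp (fun _ : ℤ => H) 2) : ℤ → H) = fun j => if j = c then v else 0 := by
  funext j
  show (lp.single 2 c v : ℤ → H) j = _
  rcases eq_or_ne j c with rfl | h
  · rw [lp.single_apply_self, if_pos rfl]
  · rw [lp.single_apply_ne _ _ _ h, if_neg h]

end Stmt13
namespace Stmt13

variable {H : Type*} [NormedAddCommGroup H] [InnerProductSpace ℂ H] [CompleteSpace H]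

section proj

variable (M : Submodule ℂ H) (hM : IsClosed (M : Set H))

lemma projL_mem (v : H) : projL M hM v ∈ M := by
  haveI : CompleteSpace M := hM.completeSpace_coe
  exact (M.orthogonalProjectionOnto v).2

lemma projL_apply_mem {v : H} (hv : v ∈ M) : projL M hM v = v := by
  haveI : CompleteSpace M := hM.completeSpace_coe
  exact Submodule.starProjection_eq_self_iff.2 hv

lemma projL_apply_orth {v : H} (hv : v ∈ Mᗮ) : projL M hM v = 0 := by
  haveI : CompleteSpace M := hM.completeSpace_coe
  show (M.orthogonalProjectionOnto v : H) = 0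
  rw [Submodule.orthogonalProjectionOnto_apply_of_mem_orthogonal hv]
  rfl

lemma projL_add_orth (v : H) :
    projL M hM v + projL Mᗮ M.isClosed_orthogonal v = v := by
  haveI : CompleteSpace M := hM.completeSpace_coe
  exact Submodule.starProjection_add_starProjection_orthogonal v

lemma projL_orth_eq : projL Mᗮ M.isClosed_orthogonal = 1 - projL M hM := by
  ext v
  have := projL_add_orth M hM v
  simp only [ContinuousLinearMap.sub_apply, ContinuousLinearMap.one_apply]
  linear_combination (norm := module) this

lemma star_projL : star (projL M hM) = projL M hM := by
  haveI : CompleteSpace M := hM.completeSpace_coe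
  exact isSelfAdjoint_starProjection M

lemma projL_comm (T : H →L[ℂ] H) (hT : ∀ v ∈ M, T v ∈ M)
    (hT' : ∀ v ∈ M, (star T) v ∈ M) :
    T * projL M hM = projL M hM * T := by
  ext v
  have hdec := projL_add_orth M hM v
  have h1 : T (projL M hM v) ∈ M := hT _ (projL_mem M hM v)
  have h2 : T (projL Mᗮ M.isClosed_orthogonal v) ∈ Mᗮ := by
    rw [Submodule.mem_orthogonal]
    intro u hu
    rw [← ContinuousLinearMap.adjoint_inner_left, ← ContinuousLinearMap.star_eq_adjoint]
    exact (Submodule.mem_orthogonal _ _).1 (projL_mem Mᗮ M.isClosed_orthogonal v) _ (hT' u hu)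
  show T (projL M hM v) = projL M hM (T v)
  conv_rhs => rw [← hdec]
  rw [map_add, map_add, projL_apply_mem M hM h1, projL_apply_orth M hM h2, add_zero]

end proj

lemma projL_mem_vN (A : VonNeumannAlgebra H) (M : Submodule ℂ H)
    (hM : IsClosed (M : Set H)) (hinv : InvariantC A M) : projL M hM ∈ A := by
  have : projL M hM ∈ A.commutant.commutant := by
    rw [VonNeumannAlgebra.mem_commutant_iff]
    intro g hg
    exact projL_comm M hM g (fun v hv => hinv g hg v hv)
      (fun v hv => hinv (star g) (star_mem hg) v hv)
  rwa [VonNeumannAlgebra.commutant_commutant] at this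

lemma projL_orth_mem_vN (A : VonNeumannAlgebra H) (M : Submodule ℂ H)
    (hM : IsClosed (M : Set H)) (hinv : InvariantC A M) :
    projL Mᗮ M.isClosed_orthogonal ∈ A := by
  rw [projL_orth_eq M hM]
  exact sub_mem (one_mem A) (projL_mem_vN A M hM hinv)

section pElFacts

variable (M : Submodule ℂ H) (hM : IsClosed (M : Set H))

lemma projL_mul_self : projL M hM * projL M hM = projL M hM := by
  ext v
  exact projL_apply_mem M hM (projL_mem M hM v)

lemma projL_mul_orth :
    projL M hM * projL Mᗮ M.isClosed_orthogonal = 0 := by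
  ext v
  exact projL_apply_orth M hM (projL_mem Mᗮ M.isClosed_orthogonal v)

lemma orth_mul_projL :
    projL Mᗮ M.isClosed_orthogonal * projL M hM = 0 := by
  ext v
  exact projL_apply_orth Mᗮ M.isClosed_orthogonal
    (M.le_orthogonal_orthogonal (projL_mem M hM v))

lemma orth_mul_orth :
    projL Mᗮ M.isClosed_orthogonal * projL Mᗮ M.isClosed_orthogonal =
      projL Mᗮ M.isClosed_orthogonal := projL_mul_self Mᗮ M.isClosed_orthogonal

lemma projL_add_orth_eq_one :
    projL M hM + projL Mᗮ M.isClosed_orthogonal = 1 := by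
  ext v
  exact projL_add_orth M hM v

lemma pEl_eq : pEl M hM = AddMonoidAlgebra.single (1 : ℤ) (projL M hM) +
    AddMonoidAlgebra.single (0 : ℤ) (projL Mᗮ M.isClosed_orthogonal) := rfl

lemma lstar_pEl : lstar (pEl M hM) =
    AddMonoidAlgebra.single (-1 : ℤ) (projL M hM) +
      AddMonoidAlgebra.single (0 : ℤ) (projL Mᗮ M.isClosed_orthogonal) := by
  rw [pEl_eq, lstar_add, lstar_single, lstar_single, star_projL, star_projL, neg_zero]

lemma lstar_pEl_mul_pEl : lstar (pEl M hM) * pEl M hM = 1 := by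
  rw [lstar_pEl, pEl_eq, add_mul, mul_add, mul_add,
    AddMonoidAlgebra.single_mul_single, AddMonoidAlgebra.single_mul_single,
    AddMonoidAlgebra.single_mul_single, AddMonoidAlgebra.single_mul_single,
    projL_mul_self, projL_mul_orth, orth_mul_projL, orth_mul_orth]
  rw [AddMonoidAlgebra.single_zero, AddMonoidAlgebra.single_zero, add_zero, zero_add,
    show (-1 : ℤ) + 1 = 0 by omega, show (0 : ℤ) + 0 = 0 by omega,
    ← AddMonoidAlgebra.single_add, projL_add_orth_eq_one, AddMonoidAlgebra.one_def]

lemma pEl_mul_lstar_pEl : pEl M hM * lstar (pEl M hM) = 1 := by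
  rw [lstar_pEl, pEl_eq, add_mul, mul_add, mul_add,
    AddMonoidAlgebra.single_mul_single, AddMonoidAlgebra.single_mul_single,
    AddMonoidAlgebra.single_mul_single, AddMonoidAlgebra.single_mul_single,
    projL_mul_self, projL_mul_orth, orth_mul_projL, orth_mul_orth]
  rw [AddMonoidAlgebra.single_zero, AddMonoidAlgebra.single_zero, add_zero, zero_add,
    show (1 : ℤ) + -1 = 0 by omega, show (0 : ℤ) + 0 = 0 by omega,
    ← AddMonoidAlgebra.single_add, projL_add_orth_eq_one, AddMonoidAlgebra.one_def]

lemma eps1_pEl : eps1 (pEl M hM) = 1 := by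
  rw [pEl_eq, eps1_add, eps1_single, eps1_single, projL_add_orth_eq_one]

lemma pEl_coeff (i : ℤ) : (pEl M hM).coeff i =
    if i = 1 then projL M hM else if i = 0 then projL Mᗮ M.isClosed_orthogonal else 0 := by
  rw [pEl, AddMonoidAlgebra.coeff_ofCoeff, Finsupp.add_apply]
  rcases eq_or_ne i 1 with rfl | h1
  · rw [Finsupp.single_eq_same, Finsupp.single_eq_of_ne (by omega), if_pos rfl, add_zero]
  · rcases eq_or_ne i 0 with rfl | h0
    · rw [Finsupp.single_eq_same, Finsupp.single_eq_of_ne (by omega), if_neg h1, if_pos rfl,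
        zero_add]
    · rw [Finsupp.single_eq_of_ne' (Ne.symm h1), Finsupp.single_eq_of_ne' (Ne.symm h0),
        if_neg h1, if_neg h0, add_zero]

lemma act_pEl (x : ℤ → H) (i : ℤ) :
    act (pEl M hM) x i = projL M hM (x (i - 1)) + projL Mᗮ M.isClosed_orthogonal (x i) := by
  have : act (pEl M hM) x = act (AddMonoidAlgebra.single (1 : ℤ) (projL M hM)) x +
      act (AddMonoidAlgebra.single (0 : ℤ) (projL Mᗮ M.isClosed_orthogonal)) x := by
    rw [pEl_eq]; exact act_add_left _ _ x
  rw [pEl_eq] at this ⊢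
  rw [this, Pi.add_apply, act_single, act_single]
  show projL M hM (x (i - 1)) + projL Mᗮ M.isClosed_orthogonal (x (i - 0)) = _
  rw [sub_zero]

lemma act_lstar_pEl (x : ℤ → H) (i : ℤ) :
    act (lstar (pEl M hM)) x i =
      projL M hM (x (i + 1)) + projL Mᗮ M.isClosed_orthogonal (x i) := by
  rw [lstar_pEl]
  rw [act_add_left, Pi.add_apply, act_single, act_single]
  show projL M hM (x (i - -1)) + projL Mᗮ M.isClosed_orthogonal (x (i - 0)) = _
  rw [sub_zero, show i - -1 = i + 1 by omega]

lemma pEl_coeff_mem (A : VonNeumannAlgebra H) (hinv : InvariantC A M) :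
    ∀ i, (pEl M hM).coeff i ∈ A := by
  intro i
  rw [pEl_coeff]
  split
  · exact projL_mem_vN A M hM hinv
  split
  · exact projL_orth_mem_vN A M hM hinv
  · exact zero_mem A

lemma pEl_coeff_neg : ∀ i < (0:ℤ), (pEl M hM).coeff i = 0 := by
  intro i hi
  rw [pEl_coeff, if_neg (by omega), if_neg (by omega)]

end pElFacts

lemma one_coeff_mem (A : VonNeumannAlgebra H) : ∀ i, (1 : LaurentOp H).coeff i ∈ A := by
  intro i
  rw [AddMonoidAlgebra.one_def, AddMonoidAlgebra.coeff_single]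
  rcases eq_or_ne i 0 with rfl | h
  · rw [Finsupp.single_eq_same]; exact one_mem A
  · rw [Finsupp.single_eq_of_ne' (Ne.symm h)]; exact zero_mem A

lemma inPPUplus_one (A : VonNeumannAlgebra H) : InPPUplus A (1 : LaurentOp H) := by
  refine ⟨⟨one_coeff_mem A, ?_, ?_, eps1_one⟩, ?_⟩
  · rw [lstar_one, one_mul]
  · rw [lstar_one, one_mul]
  · intro i hi
    rw [AddMonoidAlgebra.one_def, AddMonoidAlgebra.coeff_single, Finsupp.single_eq_of_ne (by omega)]

lemma inPPUplus_pEl_mul (A : VonNeumannAlgebra H) (M : Submodule ℂ H)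
    (hM : IsClosed (M : Set H)) (hinv : InvariantC A M) {φ : LaurentOp H}
    (hφ : InPPUplus A φ) : InPPUplus A (pEl M hM * φ) := by
  obtain ⟨⟨hmem, hl, hr, he⟩, hneg⟩ := hφ
  refine ⟨⟨mul_coeff_mem A (pEl_coeff_mem M hM A hinv) hmem, ?_, ?_, ?_⟩, ?_⟩
  · rw [lstar_mul, mul_assoc, ← mul_assoc (lstar (pEl M hM)), lstar_pEl_mul_pEl, one_mul, hl]
  · rw [lstar_mul, ← mul_assoc, mul_assoc (pEl M hM), hr, mul_one, pEl_mul_lstar_pEl]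
  · rw [eps1_mul, eps1_pEl, he, one_mul]
  · exact mul_coeff_nonneg (pEl_coeff_neg M hM) hneg

lemma actH_mul (φ ψ : LaurentOp H) : actH (φ * ψ) = act φ '' actH ψ := by
  unfold actH
  rw [← Set.image_comp]
  refine Set.image_congr fun x _ => ?_
  exact act_mul φ ψ x

lemma actH_one : actH (1 : LaurentOp H) = Hmn H 0 := by
  unfold actH
  have : ∀ x ∈ Hmn H 0, act (1 : LaurentOp H) x = id x := fun x _ => act_one x
  rw [Set.image_congr this, Set.image_id]

end Stmt13
open Stmt13 in
/--
Let `A` be a von Neumann algebra on `H`.  Let `S` be a closed subspace of `H[[t,t⁻¹]]`,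
invariant under the actions of `A'` and of `t⁻¹`, with `H[[t⁻¹]] ⊆ S ⊆ tⁿH[[t⁻¹]]` for
some `n ≥ 0`.  Then there exists `φ ∈ PPU⁺(A)` with `φ·H[[t⁻¹]] = S`; indeed `φ` can be
chosen as a product of at most `n` elements of the form `p_{M₁}` for closed
`A'`-invariant subspaces `M₁ ⊆ H`.  That is, `Ω⁺ : φ ↦ φ·H[[t⁻¹]]` maps `PPU⁺(A)` onto
`sub(H)₀^∞`.
-/
theorem stmt13 (A : VonNeumannAlgebra H) (S : Set (ℤ → H)) (hS : IsInvClosed A S)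
    (n : ℕ) (h0 : Hmn H 0 ⊆ S) (hn : S ⊆ Hmn H (n : ℤ)) :
    ∃ l : List (LaurentOp H),
      l.length ≤ n ∧
      (∀ ψ ∈ l, ∃ (M₁ : Submodule ℂ H) (hM₁ : IsClosed (M₁ : Set H)),
        InvariantC A M₁ ∧ ψ = pEl M₁ hM₁) ∧
      InPPUplus A l.prod ∧ actH l.prod = S := by
  induction n generalizing S with
  | zero =>
      refine ⟨[], le_refl 0, by simp, ?_, ?_⟩
      · rw [List.prod_nil]; exact inPPUplus_one A
      · rw [List.prod_nil, actH_one]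
        refine Set.Subset.antisymm h0 ?_
        intro x hx
        have := hn hx
        rwa [show ((0:ℕ):ℤ) = 0 by norm_num] at this
  | succ n ih =>
      classical
      obtain ⟨hl2, hcl, hz, hadd, hsmul, hshift, hcomm⟩ := hS
      have hn' : S ⊆ Hmn H ((n : ℤ) + 1) := by
        intro x hx
        have := hn hx
        rwa [show ((n+1 : ℕ) : ℤ) = (n:ℤ)+1 by push_cast; ring] at this
      -- shift iteration
      have hshiftj : ∀ (j : ℕ), ∀ x ∈ S, (fun i => x (i + (j:ℤ))) ∈ S := by
        intro j
        induction j with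
        | zero => intro x hx; simpa using hx
        | succ k ihk =>
            intro x hx
            have h2 := hshift _ (ihk x hx)
            have heq : (fun i : ℤ => (fun i' : ℤ => x (i' + (k:ℤ))) (i + 1)) =
                (fun i : ℤ => x (i + ((k+1:ℕ):ℤ))) := by
              funext i
              show x (i + 1 + (k:ℤ)) = x (i + ((k+1:ℕ):ℤ))
              rw [show i + 1 + (k:ℤ) = i + ((k+1:ℕ):ℤ) by push_cast; ring]
            rwa [heq] at h2
      -- the subspace N
      let N₀ : Submodule ℂ H :=
        { carrier := {v | ∃ x ∈ S, x ((n:ℤ)+1) = v}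
          add_mem' := by rintro a b ⟨x, hx, rfl⟩ ⟨y, hy, rfl⟩
                         exact ⟨x + y, hadd x hx y hy, rfl⟩
          zero_mem' := ⟨0, hz, rfl⟩
          smul_mem' := by rintro c a ⟨x, hx, rfl⟩
                          exact ⟨c • x, hsmul c x hx, rfl⟩ }
      let N : Submodule ℂ H := N₀.topologicalClosure
      have hNcl : IsClosed (N : Set H) := Submodule.isClosed_topologicalClosure N₀
      have hN₀N : ∀ x ∈ S, x ((n:ℤ)+1) ∈ N := fun x hx =>
        N₀.le_topologicalClosure ⟨x, hx, rfl⟩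
      have hNinv : InvariantC A N := by
        intro ψ hψ v hv
        have hmapsto : Set.MapsTo ψ (N₀ : Set H) (N₀ : Set H) := by
          rintro w ⟨x, hx, rfl⟩
          exact ⟨fun i => ψ (x i), hcomm ψ hψ x hx, rfl⟩
        have hv' : v ∈ closure (N₀ : Set H) := hv
        exact map_mem_closure ψ.continuous hv' hmapsto
      -- delta lemma
      have hdelta : ∀ v ∈ N, (fun j : ℤ => if j = 1 then v else 0) ∈ S := by
        have hC : IsClosed ((singleCLM 1) ⁻¹'
            {y : lp (fun _ : ℤ => H) 2 | (y : ℤ → H) ∈ S}) :=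
          hcl.preimage (singleCLM 1).continuous
        have hN₀C : (N₀ : Set H) ⊆ (singleCLM 1) ⁻¹'
            {y : lp (fun _ : ℤ => H) 2 | (y : ℤ → H) ∈ S} := by
          rintro v ⟨x, hx, rfl⟩
          show ((singleCLM 1 (x ((n:ℤ)+1)) : lp (fun _ : ℤ => H) 2) : ℤ → H) ∈ S
          rw [singleCLM_coe]
          set z : ℤ → H := fun i => x (i + (n:ℤ)) with hzdef
          have hzS : z ∈ S := hshiftj n x hx
          have hδl2 : Memℓp (fun j : ℤ => if j = 1 then x ((n:ℤ)+1) else 0) 2 := by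
            rw [← singleCLM_coe]; exact lp.memℓp _
          have hw : z + (-1 : ℂ) • (fun j : ℤ => if j = 1 then x ((n:ℤ)+1) else 0) ∈
              Hmn H 0 := by
            constructor
            · exact (hl2 z hzS).add (hδl2.const_smul _)
            · intro i hi
              simp only [Pi.add_apply, Pi.smul_apply]
              rcases eq_or_ne i 1 with rfl | h
              · rw [if_pos rfl]
                show x (1 + (n:ℤ)) + (-1:ℂ) • x ((n:ℤ)+1) = 0
                rw [show (1:ℤ) + (n:ℤ) = (n:ℤ)+1 by omega]
                module
              · rw [if_neg h, smul_zero, add_zero]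
                show x (i + (n:ℤ)) = 0
                exact (hn' hx).2 (i + (n:ℤ)) (by omega)
          have hrw : (fun j : ℤ => if j = 1 then x ((n:ℤ)+1) else 0) =
              z + (-1:ℂ) • (z + (-1 : ℂ) •
                (fun j : ℤ => if j = 1 then x ((n:ℤ)+1) else 0)) := by
            funext j
            simp only [Pi.add_apply, Pi.smul_apply]
            module
          rw [hrw]
          exact hadd z hzS _ (hsmul _ _ (h0 hw))
        intro v hv
        have hv' : v ∈ closure (N₀ : Set H) := hv
        have hvC := closure_minimal hN₀C hC hv'
        have := hvC
        rw [Set.mem_preimage, Set.mem_setOf_eq, singleCLM_coe] at this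
        exact this
      -- inverse action identities
      have hqp : ∀ x : ℤ → H, act (pEl N hNcl) (act (lstar (pEl N hNcl)) x) = x := fun x => by
        rw [← act_mul, pEl_mul_lstar_pEl, act_one]
      have hpq : ∀ x : ℤ → H, act (lstar (pEl N hNcl)) (act (pEl N hNcl) x) = x := fun x => by
        rw [← act_mul, lstar_pEl_mul_pEl, act_one]
      -- commutant commutes with the projections
      have hcommP : ∀ ψ ∈ A.commutant, ∀ v, ψ (projL N hNcl v) = projL N hNcl (ψ v) := by
        intro ψ hψ v
        have h := VonNeumannAlgebra.mem_commutant_iff.1 hψ _ (projL_mem_vN A N hNcl hNinv)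
        have h2 := DFunLike.congr_fun h v
        simpa [ContinuousLinearMap.mul_apply] using h2.symm
      have hcommQ : ∀ ψ ∈ A.commutant, ∀ v,
          ψ (projL Nᗮ N.isClosed_orthogonal v) = projL Nᗮ N.isClosed_orthogonal (ψ v) := by
        intro ψ hψ v
        rw [projL_orth_eq N hNcl]
        simp only [ContinuousLinearMap.sub_apply, ContinuousLinearMap.one_apply, map_sub]
        rw [hcommP ψ hψ v]
      -- properties of S' = act (lstar p) '' S
      have hS'mem : ∀ y ∈ act (lstar (pEl N hNcl)) '' S, Memℓp y 2 := by
        rintro y ⟨x, hx, rfl⟩; exact memℓp_act _ (hl2 x hx)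
      have hsetEq : {y : lp (fun _ : ℤ => H) 2 |
            (y : ℤ → H) ∈ act (lstar (pEl N hNcl)) '' S} =
          (actCLM (pEl N hNcl)) ⁻¹' {z : lp (fun _ : ℤ => H) 2 | (z : ℤ → H) ∈ S} := by
        ext y
        simp only [Set.mem_setOf_eq, Set.mem_preimage, actCLM_coe]
        constructor
        · rintro ⟨x, hx, hxy⟩
          rw [← hxy, hqp]; exact hx
        · intro hy
          exact ⟨act (pEl N hNcl) ↑y, hy, hpq ↑y⟩
      have hS'closed : IsClosed {y : lp (fun _ : ℤ => H) 2 |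
          (y : ℤ → H) ∈ act (lstar (pEl N hNcl)) '' S} := by
        rw [hsetEq]; exact hcl.preimage (actCLM (pEl N hNcl)).continuous
      have hS'inv : IsInvClosed A (act (lstar (pEl N hNcl)) '' S) := by
        refine ⟨hS'mem, hS'closed, ⟨0, hz, act_zero_right _⟩, ?_, ?_, ?_, ?_⟩
        · rintro y₁ ⟨x₁, hx₁, rfl⟩ y₂ ⟨x₂, hx₂, rfl⟩
          exact ⟨x₁ + x₂, hadd x₁ hx₁ x₂ hx₂, act_add_right _ x₁ x₂⟩
        · rintro c y₁ ⟨x₁, hx₁, rfl⟩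
          exact ⟨c • x₁, hsmul c x₁ hx₁, act_smul_right _ c x₁⟩
        · rintro y₁ ⟨x₁, hx₁, rfl⟩
          exact ⟨fun i => x₁ (i + 1), hshift x₁ hx₁, act_shift _ x₁⟩
        · rintro ψ hψ y₁ ⟨x₁, hx₁, rfl⟩
          refine ⟨fun i => ψ (x₁ i), hcomm ψ hψ x₁ hx₁, ?_⟩
          funext i
          rw [act_lstar_pEl, act_lstar_pEl, map_add, hcommP ψ hψ, hcommQ ψ hψ]
      have h0S : Hmn H 0 ⊆ act (lstar (pEl N hNcl)) '' S := by
        rintro y ⟨hy2, hyv⟩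
        refine ⟨act (pEl N hNcl) y, ?_, hpq y⟩
        have huS : (fun j : ℤ => if j = 1 then projL N hNcl (y 0) else 0) ∈ S :=
          hdelta _ (projL_mem N hNcl (y 0))
        have hul2 : Memℓp (fun j : ℤ => if j = 1 then projL N hNcl (y 0) else 0) 2 := by
          rw [← singleCLM_coe]; exact lp.memℓp _
        have hw : act (pEl N hNcl) y + (-1:ℂ) •
            (fun j : ℤ => if j = 1 then projL N hNcl (y 0) else 0) ∈ Hmn H 0 := by
          constructor
          · exact (memℓp_act _ hy2).add (hul2.const_smul _)
          · intro i hi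
            simp only [Pi.add_apply, Pi.smul_apply]
            rw [act_pEl]
            rcases eq_or_ne i 1 with rfl | h
            · rw [if_pos rfl, show (1:ℤ) - 1 = 0 by omega, hyv 1 hi, map_zero, add_zero]
              module
            · rw [if_neg h, smul_zero, add_zero, hyv i hi, hyv (i-1) (by omega), map_zero,
                map_zero, add_zero]
        have hrw : act (pEl N hNcl) y =
            (fun j : ℤ => if j = 1 then projL N hNcl (y 0) else 0) +
              (act (pEl N hNcl) y + (-1:ℂ) •
                (fun j : ℤ => if j = 1 then projL N hNcl (y 0) else 0)) := by
          funext j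
          simp only [Pi.add_apply, Pi.smul_apply]
          module
        rw [hrw]
        exact hadd _ huS _ (h0 hw)
      have hnS : act (lstar (pEl N hNcl)) '' S ⊆ Hmn H (n : ℤ) := by
        rintro y ⟨x, hx, rfl⟩
        refine ⟨memℓp_act _ (hl2 x hx), ?_⟩
        intro i hi
        rw [act_lstar_pEl]
        rcases eq_or_ne i ((n:ℤ)+1) with rfl | h
        · rw [(hn' hx).2 ((n:ℤ)+1+1) (by omega), map_zero, zero_add]
          exact projL_apply_orth Nᗮ N.isClosed_orthogonal
            (N.le_orthogonal_orthogonal (hN₀N x hx))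
        · rw [(hn' hx).2 (i+1) (by omega), (hn' hx).2 i (by omega), map_zero, map_zero,
            add_zero]
      obtain ⟨l, hlen, hforms, hppu, hact⟩ := ih (act (lstar (pEl N hNcl)) '' S)
        hS'inv h0S hnS
      refine ⟨pEl N hNcl :: l, ?_, ?_, ?_, ?_⟩
      · simpa using Nat.succ_le_succ hlen
      · intro ψ hψ
        rcases List.mem_cons.1 hψ with rfl | hmem
        · exact ⟨N, hNcl, hNinv, rfl⟩
        · exact hforms ψ hmem
      · rw [List.prod_cons]
        exact inPPUplus_pEl_mul A N hNcl hNinv hppu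
      · rw [List.prod_cons, actH_mul, hact]
        ext x
        constructor
        · rintro ⟨y, ⟨x', hx', rfl⟩, rfl⟩
          rw [hqp]; exact hx'
        · intro hx
          exact ⟨act (lstar (pEl N hNcl)) x, ⟨x, hx, rfl⟩, hqp x⟩
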